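/- Enhancement Young diagrams (R, C) span for the zero-set Z under enhanced growth if and only if Z ⊆ R ⊞ C. -/

import Mathlib

def IsYoung (S : Set (ℕ × ℕ)) : Prop :=
  ∀ p q : ℕ × ℕ, q ∈ S → p.1 ≤ q.1 → p.2 ≤ q.2 → p ∈ S

/-- Number of points of `A` on the horizontal line through `p`. -/
noncomputable def rowCount (A : Set (ℕ × ℕ)) (p : ℕ × ℕ) : ℕ :=
  {k : ℕ | (k, p.2) ∈ A}.ncard

/-- Number of points of `A` on the vertical line through `p`. -/
noncomputable def colCount (A : Set (ℕ × ℕ)) (p : ℕ × ℕ) : ℕ :=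
  {k : ℕ | (p.1, k) ∈ A}.ncard

/-- Enhanced neighborhood growth transformation with zero-set `Z` and
enhancements `r` (row) and `c` (column). -/
noncomputable def Ten (Z : Set (ℕ × ℕ)) (r c : ℕ → ℕ) (A : Set (ℕ × ℕ)) :
    Set (ℕ × ℕ) :=
  A ∪ {p | (rowCount A p + r p.2, colCount A p + c p.1) ∉ Z}

open Pointwise in
def boxSum (X Y : Set (ℕ × ℕ)) : Set (ℕ × ℕ) := (Xᶜ + Yᶜ)ᶜ

/-!
If `z ∈ Z` splits as `z = a + b` with `r a.2 ≤ a.1` and `c b.1 ≤ b.2`, then no point of the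
quadrant above `(b.1, a.2)` is ever occupied: such a point sees fewer than `b.1` occupied points
on its row and fewer than `a.2` on its column, so by monotonicity of `r`, `c` and `Z` its
enhanced counts stay below `z`, hence in `Z`. Conversely, all occupied sets are Young diagrams, so a
minimal never-occupied point `p` eventually sees exactly `p.1` points on its row and `p.2` on its
column; since it is still not added, `(p.1 + r p.2, p.2 + c p.1) ∈ Z`, and this point is
`(r p.2, p.2) + (p.1, c p.1)`, a sum of a point outside `R` and a point outside `C`.
-/

open Set

def Spans (Z : Set (ℕ × ℕ)) (r c : ℕ → ℕ) : Prop :=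
  ∀ p : ℕ × ℕ, ∃ t, p ∈ (Ten Z r c)^[t] ∅

theorem isYoung_iff_isLowerSet {S : Set (ℕ × ℕ)} : IsYoung S ↔ IsLowerSet S :=
  ⟨fun h _ _ hle hq => h _ _ hq hle.1 hle.2, fun h _ _ hq h₁ h₂ => h ⟨h₁, h₂⟩ hq⟩

open Pointwise in
theorem mem_boxSum_iff {X Y : Set (ℕ × ℕ)} {z : ℕ × ℕ} :
    z ∈ boxSum X Y ↔ ∀ a ∉ X, ∀ b ∉ Y, a + b ≠ z := by
  simp [boxSum, mem_add]

section Counts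

variable {A : Set (ℕ × ℕ)} {p q : ℕ × ℕ}

theorem rowCount_le_of_forall_lt {n : ℕ} (h : ∀ k, (k, p.2) ∈ A → k < n) :
    rowCount A p ≤ n :=
  (ncard_le_ncard h (finite_Iio n)).trans (ncard_Iio_nat n).le

theorem colCount_le_of_forall_lt {n : ℕ} (h : ∀ k, (p.1, k) ∈ A → k < n) :
    colCount A p ≤ n :=
  (ncard_le_ncard h (finite_Iio n)).trans (ncard_Iio_nat n).le

theorem rowCount_le_of_le (hA : IsLowerSet A) (hp : p ∉ A) (hpq : p.2 ≤ q.2) :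
    rowCount A q ≤ rowCount A p :=
  ncard_le_ncard (fun k hk => @hA (k, q.2) (k, p.2) ⟨le_rfl, hpq⟩ hk)
    ((finite_Iio p.1).subset fun k hk =>
      lt_of_not_ge fun hle => hp (@hA (k, p.2) p ⟨hle, le_rfl⟩ hk))

theorem colCount_le_of_le (hA : IsLowerSet A) (hp : p ∉ A) (hpq : p.1 ≤ q.1) :
    colCount A q ≤ colCount A p :=
  ncard_le_ncard (fun k hk => @hA (q.1, k) (p.1, k) ⟨hpq, le_rfl⟩ hk)
    ((finite_Iio p.2).subset fun k hk =>
      lt_of_not_ge fun hle => hp (@hA (p.1, k) p ⟨le_rfl, hle⟩ hk))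

theorem rowCount_eq_of_Iio_subset (hA : IsLowerSet A) (hp : p ∉ A) (hlt : Iio p ⊆ A) :
    rowCount A p = p.1 := by
  have hrow : {k | (k, p.2) ∈ A} = Iio p.1 := by
    ext k
    exact ⟨fun hk => lt_of_not_ge fun hle => hp (@hA (k, p.2) p ⟨hle, le_rfl⟩ hk),
      fun hk => hlt (Prod.mk_lt_mk_iff_left.2 hk)⟩
  rw [rowCount, hrow, ncard_Iio_nat]

theorem colCount_eq_of_Iio_subset (hA : IsLowerSet A) (hp : p ∉ A) (hlt : Iio p ⊆ A) :
    colCount A p = p.2 := by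
  have hcol : {k | (p.1, k) ∈ A} = Iio p.2 := by
    ext k
    exact ⟨fun hk => lt_of_not_ge fun hle => hp (@hA (p.1, k) p ⟨le_rfl, hle⟩ hk),
      fun hk => hlt (Prod.mk_lt_mk_iff_right.2 hk)⟩
  rw [colCount, hcol, ncard_Iio_nat]

end Counts

section Growth

variable {Z : Set (ℕ × ℕ)} {r c : ℕ → ℕ}

theorem monotone_iterate_Ten : Monotone fun t => (Ten Z r c)^[t] ∅ :=
  fun _ _ hst => Function.monotone_iterate_of_id_le (fun _ => subset_union_left) hst ∅

theorem isLowerSet_Ten (hZ : IsLowerSet Z) (hr : Antitone r) (hc : Antitone c)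
    {A : Set (ℕ × ℕ)} (hA : IsLowerSet A) : IsLowerSet (Ten Z r c A) := by
  rintro q p hpq (hq | hq)
  · exact Or.inl (hA hpq hq)
  by_cases hp : p ∈ A
  · exact Or.inl hp
  refine Or.inr fun hpZ => hq (hZ ?_ hpZ)
  exact ⟨add_le_add (rowCount_le_of_le hA hp hpq.2) (hr hpq.2),
    add_le_add (colCount_le_of_le hA hp hpq.1) (hc hpq.1)⟩

theorem isLowerSet_iterate_Ten (hZ : IsLowerSet Z) (hr : Antitone r) (hc : Antitone c)
    (t : ℕ) : IsLowerSet ((Ten Z r c)^[t] ∅) :=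
  Function.Iterate.rec _ isLowerSet_empty (fun _ => isLowerSet_Ten hZ hr hc) t

theorem Ten_subset_compl_Ici (hZ : IsLowerSet Z) (hr : Antitone r) (hc : Antitone c)
    {a b : ℕ × ℕ} (hab : a + b ∈ Z) (ha : r a.2 ≤ a.1) (hb : c b.1 ≤ b.2)
    {A : Set (ℕ × ℕ)} (hA : A ⊆ (Ici (b.1, a.2))ᶜ) : Ten Z r c A ⊆ (Ici (b.1, a.2))ᶜ := by
  rintro q (hq | hq) ⟨hbq, haq⟩
  · exact hA hq ⟨hbq, haq⟩
  have hrow : rowCount A q ≤ b.1 :=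
    rowCount_le_of_forall_lt fun _ hk => lt_of_not_ge fun hle => hA hk ⟨hle, haq⟩
  have hcol : colCount A q ≤ a.2 :=
    colCount_le_of_forall_lt fun _ hk => lt_of_not_ge fun hle => hA hk ⟨hbq, hle⟩
  have hrq : r q.2 ≤ a.1 := (hr haq).trans ha
  have hcq : c q.1 ≤ b.2 := (hc hbq).trans hb
  exact hq (hZ ⟨(add_le_add hrow hrq).trans_eq (add_comm _ _), add_le_add hcol hcq⟩ hab)

theorem subset_boxSum_of_spans (hZ : IsLowerSet Z) (hr : Antitone r) (hc : Antitone c)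
    (h : Spans Z r c) : Z ⊆ boxSum {p | p.1 < r p.2} {p | p.2 < c p.1} := by
  intro z hz
  rw [mem_boxSum_iff]
  rintro a ha b hb rfl
  obtain ⟨t, ht⟩ := h (b.1, a.2)
  have hcorner : (Ten Z r c)^[t] ∅ ⊆ (Ici (b.1, a.2))ᶜ :=
    Function.Iterate.rec _ (empty_subset _)
      (fun _ => Ten_subset_compl_Ici hZ hr hc hz (not_lt.1 ha) (not_lt.1 hb)) t
  exact hcorner ht self_mem_Ici

theorem spans_of_subset_boxSum (hZ : IsLowerSet Z) (hr : Antitone r) (hc : Antitone c)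
    (h : Z ⊆ boxSum {p | p.1 < r p.2} {p | p.2 < c p.1}) : Spans Z r c := by
  by_contra hspan
  obtain ⟨p, hp, hmin⟩ := wellFounded_lt.has_min {p | ∀ t, p ∉ (Ten Z r c)^[t] ∅}
    (by unfold Spans at hspan; push Not at hspan; exact hspan)
  obtain ⟨t, ht⟩ : ∃ t, (Finset.Iio p : Set (ℕ × ℕ)) ⊆ (Ten Z r c)^[t] ∅ :=
    monotone_iterate_Ten.directed_le.exists_mem_subset_of_finset_subset_biUnion fun q hq => by
      simpa using fun hq' => hmin q hq' (Finset.mem_Iio.1 hq)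
  rw [Finset.coe_Iio] at ht
  have hA := isLowerSet_iterate_Ten hZ hr hc t
  have hpZ : (p.1 + r p.2, p.2 + c p.1) ∈ Z := by
    have hnext := hp (t + 1)
    rw [Function.iterate_succ_apply'] at hnext
    simp only [Ten, mem_union, mem_ofPred_eq, not_or, not_not,
      rowCount_eq_of_Iio_subset hA (hp t) ht, colCount_eq_of_Iio_subset hA (hp t) ht] at hnext
    exact hnext.2
  exact mem_boxSum_iff.1 (h hpZ) (r p.2, p.2) (by simp) (p.1, c p.1) (by simp)
    (by ext <;> simp [add_comm])

end Growth

theorem enhanced_spans_iff_boxSum_general (Z : Set (ℕ × ℕ))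
    (hZ : IsYoung Z) (r c : ℕ → ℕ) (hr : Antitone r) (hc : Antitone c) :
    (∀ p : ℕ × ℕ, ∃ t, p ∈ (Ten Z r c)^[t] ∅) ↔
      Z ⊆ boxSum {p : ℕ × ℕ | p.1 < r p.2} {p : ℕ × ℕ | p.2 < c p.1} := by
  rw [isYoung_iff_isLowerSet] at hZ
  exact ⟨subset_boxSum_of_spans hZ hr hc, spans_of_subset_boxSum hZ hr hc⟩

theorem enhanced_spans_iff_boxSum (Z : Set (ℕ × ℕ)) (hZfin : Z.Finite)
    (hZ : IsYoung Z) (r c : ℕ → ℕ) (hr : Antitone r) (hc : Antitone c)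
    (hrfin : {j | r j ≠ 0}.Finite) (hcfin : {i | c i ≠ 0}.Finite) :
    (∀ p : ℕ × ℕ, ∃ t, p ∈ (Ten Z r c)^[t] ∅) ↔
      Z ⊆ boxSum {p : ℕ × ℕ | p.1 < r p.2} {p : ℕ × ℕ | p.2 < c p.1} :=
  enhanced_spans_iff_boxSum_general Z hZ r c hr hc
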